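/- Let V and V' be left vector spaces over division rings R and R' with dim V = n ≥ 2 finite, and let g : V → V' be a non-trivial GL-mapping such that the R'-subspace V_g spanned by g(V) has dimension at most n. Then dim V_g = n, and for every (n−1)-dimensional subspace S ⊆ V, the R'-subspace of V' spanned by g(S) has dimension exactly n−1. -/

import Mathlib

/-! Write `S_g` for the span of `g '' S`. Since `GL(V)` acts transitively on subspaces of a
given dimension and `g` intertwines it with `GL(V')`, `dim S_g = d (dim S)` for some function `d`.
If `d (k + 1) ≤ d k` with `k < n`, then `S_g = (S ⊔ ⟨x⟩)_g` for every `k`-dimensional `S` and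
every `x`, so `g(V) ⊆ S_g`. Taking `S` inside the fixed hyperplane of a transvection `u`, the
partner `u'` fixes `S_g ⊇ g(V)` pointwise, hence `g ∘ u = g`; as transvections move any nonzero
vector to any vector outside its span, `g` would be constant on `V \ {0}`. So `d` is strictly
increasing, `d k ≥ k`, and `d n ≤ n` forces `d n = n` and `d (n - 1) = n - 1`. -/

open Module Submodule

section LinearAlgebra

variable {R V : Type*} [DivisionRing R] [AddCommGroup V] [Module R V]

theorem notMem_span_singleton_sub {x y : V} (hx : x ≠ 0) (hy : y ∉ span R {x}) :
    x ∉ span R {y - x} := by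
  intro hmem
  obtain ⟨c, hc⟩ := mem_span_singleton.mp hmem
  have hc0 : c ≠ 0 := by
    rintro rfl
    exact hx (by simpa using hc.symm)
  have hyx : y = c⁻¹ • x + x := by
    rw [← sub_eq_iff_eq_add]
    conv_rhs => rw [← hc, smul_smul, inv_mul_cancel₀ hc0, one_smul]
  rw [hyx] at hy
  exact hy (add_mem (smul_mem _ _ (mem_span_singleton_self x)) (mem_span_singleton_self x))

theorem apply_eq_of_forall_notMem_span_singleton {X : Type*} {f : V → X}
    (hV : 1 < finrank R V) (h : ∀ x y : V, x ≠ 0 → y ∉ span R {x} → f x = f y)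
    {x y : V} (hx : x ≠ 0) (hy : y ≠ 0) : f x = f y := by
  obtain ⟨z, hz⟩ : ∃ z, z ∉ span R {x} := by
    by_contra! hall
    have hrank := finrank_span_singleton (K := R) hx
    rw [eq_top_iff'.mpr hall, finrank_top] at hrank
    omega
  by_cases hyx : y ∈ span R {x}
  · exact (h x z hx hz).trans
      (h y z hy fun hzy => hz ((span_singleton_le_iff_mem _ _).mpr hyx hzy)).symm
  · exact h x y hx hyx

variable [FiniteDimensional R V]

theorem LinearEquiv.exists_extend {S T : Submodule R V} (e : S ≃ₗ[R] T) :
    ∃ u : V ≃ₗ[R] V, ∀ s : S, u s = e s := by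
  obtain ⟨C, hC⟩ := S.exists_isCompl
  obtain ⟨C', hC'⟩ := T.exists_isCompl
  have hCC : finrank R C = finrank R C' := by
    have := finrank_add_eq_of_isCompl hC
    have := finrank_add_eq_of_isCompl hC'
    have := e.finrank_eq
    omega
  refine ⟨(prodEquivOfIsCompl S C hC).symm.trans
      ((e.prodCongr (LinearEquiv.ofFinrankEq C C' hCC)).trans (prodEquivOfIsCompl T C' hC')),
    fun s => ?_⟩
  simp

theorem Submodule.exists_linearEquiv_map_eq {S T : Submodule R V}
    (h : finrank R S = finrank R T) : ∃ u : V ≃ₗ[R] V, S.map (u : V →ₗ[R] V) = T := by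
  obtain ⟨u, hu⟩ := (LinearEquiv.ofFinrankEq S T h).exists_extend
  have hcomp : (u : V →ₗ[R] V) ∘ₗ S.subtype =
      T.subtype ∘ₗ (LinearEquiv.ofFinrankEq S T h : S →ₗ[R] T) := LinearMap.ext hu
  refine ⟨u, ?_⟩
  rw [← S.range_subtype, ← LinearMap.range_comp, hcomp, LinearMap.range_comp,
    LinearEquiv.range, Submodule.map_top, range_subtype]

theorem Submodule.exists_le_finrank_eq (H : Submodule R V) {k : ℕ} (hk : k ≤ finrank R H) :
    ∃ S ≤ H, finrank R S = k := by
  induction k with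
  | zero => exact ⟨⊥, bot_le, finrank_bot R V⟩
  | succ k ih =>
    obtain ⟨S, hSH, hS⟩ := ih (by omega)
    obtain ⟨w, hwH, hwS⟩ := SetLike.exists_of_lt (hSH.lt_of_ne (by rintro rfl; omega))
    refine ⟨S ⊔ span R {w}, sup_le hSH ((span_singleton_le_iff_mem w H).mpr hwH), ?_⟩
    rw [finrank_sup_span_singleton hwS, hS]

theorem exists_transvection_apply_eq {x y : V} (hx : x ∉ span R {y - x}) :
    ∃ (u : V ≃ₗ[R] V) (H : Submodule R V),
      finrank R H + 1 = finrank R V ∧ (∀ h ∈ H, u h = h) ∧ u x = y := by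
  obtain ⟨f, hfx, hf⟩ := exists_dual_map_eq_bot_of_notMem hx inferInstance
  -- right multiplication by a scalar keeps `f` left `R`-linear
  set f' : Dual R V := f.smulRight (f x)⁻¹
  have hf'x : f' x = 1 := mul_inv_cancel₀ hfx
  have hf'yx : f' (y - x) = 0 := by
    have : f (y - x) ∈ (span R {y - x}).map f := mem_map_of_mem (mem_span_singleton_self _)
    rw [hf, mem_bot] at this
    simp [f', this]
  have hf' : f' ≠ 0 := fun h => by simp [h] at hf'x
  refine ⟨LinearEquiv.transvection hf'yx, LinearMap.ker f',
    Dual.finrank_ker_add_one_of_ne_zero hf', fun h hh => ?_, ?_⟩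
  · rw [LinearEquiv.transvection.apply, LinearMap.mem_ker.mp hh, zero_smul, add_zero]
  · rw [LinearEquiv.transvection.apply, hf'x, one_smul, add_sub_cancel]

end LinearAlgebra

def IsGLMapping (R R' : Type*) {V V' : Type*} [DivisionRing R] [DivisionRing R']
    [AddCommGroup V] [Module R V] [AddCommGroup V'] [Module R' V'] (g : V → V') : Prop :=
  ∀ u : V ≃ₗ[R] V, ∃ u' : V' ≃ₗ[R'] V', g ∘ ⇑u = ⇑u' ∘ g

namespace IsGLMapping

variable {R R' V V' : Type*} [DivisionRing R] [DivisionRing R']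
  [AddCommGroup V] [Module R V] [AddCommGroup V'] [Module R' V']
  {g : V → V'} (hg : IsGLMapping R R' g)
include hg

theorem apply_apply_eq_of_fixes {u : V ≃ₗ[R] V} {S : Submodule R V} (hu : ∀ s ∈ S, u s = s)
    (hS : Set.range g ⊆ span R' (g '' S)) (x : V) : g (u x) = g x := by
  obtain ⟨u', hgu⟩ := hg u
  have hfix : span R' (g '' S) ≤ LinearMap.eqLocus (u' : V' →ₗ[R'] V') LinearMap.id := by
    rw [span_le]
    rintro _ ⟨s, hs, rfl⟩
    exact (congrFun hgu s).symm.trans (congrArg g (hu s hs))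
  exact (congrFun hgu x).trans (hfix (hS (Set.mem_range_self x)))

variable [FiniteDimensional R V]

theorem finrank_span_image_eq {S T : Submodule R V} (h : finrank R S = finrank R T) :
    finrank R' (span R' (g '' S)) = finrank R' (span R' (g '' T)) := by
  obtain ⟨u, rfl⟩ := exists_linearEquiv_map_eq h
  obtain ⟨u', hgu⟩ := hg u
  have himg : g '' (S.map (u : V →ₗ[R] V)) = (u' : V' →ₗ[R'] V') '' (g '' S) := by
    rw [map_coe, ← Set.image_comp, ← Set.image_comp, LinearEquiv.coe_coe, hgu]
    rfl
  rw [himg, span_image, LinearEquiv.finrank_map_eq]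

theorem apply_eq_of_forall_range_subset_span_image {k : ℕ} (hk : k < finrank R V)
    (h : ∀ S : Submodule R V, finrank R S = k → Set.range g ⊆ span R' (g '' S))
    {x y : V} (hx : x ≠ 0) (hy : y ∉ span R {x}) : g x = g y := by
  obtain ⟨u, H, hH, hu, rfl⟩ := exists_transvection_apply_eq (notMem_span_singleton_sub hx hy)
  obtain ⟨S, hSH, hS⟩ := H.exists_le_finrank_eq (k := k) (by omega)
  exact (hg.apply_apply_eq_of_fixes (fun s hs => hu s (hSH hs)) (h S hS) x).symm

variable [FiniteDimensional R' (span R' (Set.range g))]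

theorem range_subset_span_image {S T : Submodule R V} (hST : finrank R T = finrank R S + 1)
    (hle : finrank R' (span R' (g '' T)) ≤ finrank R' (span R' (g '' S)))
    {S₀ : Submodule R V} (hS₀ : finrank R S₀ = finrank R S) :
    Set.range g ⊆ span R' (g '' S₀) := by
  rintro _ ⟨x, rfl⟩
  by_cases hx : x ∈ S₀
  · exact subset_span ⟨x, hx, rfl⟩
  have hT₀ : finrank R (S₀ ⊔ span R {x} : Submodule R V) = finrank R T := by
    rw [finrank_sup_span_singleton hx, hS₀, hST]
  have : FiniteDimensional R' (span R' (g '' (S₀ ⊔ span R {x} : Submodule R V))) :=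
    finiteDimensional_of_le (span_mono (Set.image_subset_range g _))
  have hspan : span R' (g '' S₀) = span R' (g '' (S₀ ⊔ span R {x} : Submodule R V)) := by
    refine eq_of_le_of_finrank_le (span_mono (Set.image_mono (by exact_mod_cast le_sup_left))) ?_
    rw [hg.finrank_span_image_eq hT₀, hg.finrank_span_image_eq hS₀]
    exact hle
  rw [hspan]
  exact subset_span ⟨x, mem_sup_right (mem_span_singleton_self x), rfl⟩

variable (hnt : ∃ x y : V, x ≠ 0 ∧ y ≠ 0 ∧ g x ≠ g y) (hV : 1 < finrank R V)
include hnt hV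

theorem finrank_span_image_lt {S T : Submodule R V} (hST : finrank R T = finrank R S + 1) :
    finrank R' (span R' (g '' S)) < finrank R' (span R' (g '' T)) := by
  by_contra! hle
  obtain ⟨x, y, hx, hy, hxy⟩ := hnt
  have hk : finrank R S < finrank R V := by
    have := T.finrank_le
    omega
  exact hxy (apply_eq_of_forall_notMem_span_singleton hV
    (fun _ _ => hg.apply_eq_of_forall_range_subset_span_image hk
      (fun _ hS₀ => hg.range_subset_span_image hST hle hS₀)) hx hy)

theorem finrank_le_finrank_span_image (S : Submodule R V) :
    finrank R S ≤ finrank R' (span R' (g '' S)) := by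
  induction hS : finrank R S generalizing S with
  | zero => exact Nat.zero_le _
  | succ k ih =>
    obtain ⟨S₀, -, hS₀⟩ := S.exists_le_finrank_eq (k := k) (by omega)
    exact (ih S₀ hS₀).trans_lt (hg.finrank_span_image_lt hnt hV (by rw [hS, hS₀]))

end IsGLMapping

/-- **Lemma 6 (Pankov).** If `g` is a non-trivial GL-mapping with `dim V_g ≤ n`, then
`dim V_g = n` and for every `(n−1)`-dimensional subspace `S ⊆ V` the subspace `S_g`
spanned by `g(S)` is `(n−1)`-dimensional. -/
theorem stmt_10 {R R' V V' : Type*} [DivisionRing R] [DivisionRing R']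
    [AddCommGroup V] [Module R V] [AddCommGroup V'] [Module R' V']
    (n : ℕ) (hn : 2 ≤ n) [FiniteDimensional R V] (hdim : Module.finrank R V = n)
    (g : V → V')
    (hGL : ∀ u : V ≃ₗ[R] V, ∃ u' : V' ≃ₗ[R'] V', g ∘ ⇑u = ⇑u' ∘ g)
    (hnt : ∃ x y : V, x ≠ 0 ∧ y ≠ 0 ∧ g x ≠ g y)
    (hspan : Module.rank R' (Submodule.span R' (Set.range g)) ≤ n) :
    Module.rank R' (Submodule.span R' (Set.range g)) = n ∧
    ∀ S : Submodule R V, Module.finrank R S = n - 1 →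
      Module.rank R' (Submodule.span R' (g '' (S : Set V))) = ((n - 1 : ℕ) : Cardinal) := by
  have hg : IsGLMapping R R' g := hGL
  have hV : 1 < finrank R V := by omega
  have : FiniteDimensional R' (span R' (Set.range g)) :=
    rank_lt_aleph0_iff.mp (hspan.trans_lt Cardinal.natCast_lt_aleph0)
  have himg_top : g '' (⊤ : Submodule R V) = Set.range g := by
    rw [top_coe, Set.image_univ]
  have hVg : finrank R' (span R' (Set.range g)) = n := by
    refine le_antisymm (finrank_le_of_rank_le hspan) ?_
    have := hg.finrank_le_finrank_span_image hnt hV ⊤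
    rwa [finrank_top, hdim, himg_top] at this
  refine ⟨by rw [← finrank_eq_rank, hVg], fun S hS => ?_⟩
  have hlt := hg.finrank_span_image_lt hnt hV (S := S) (T := ⊤) (by rw [finrank_top]; omega)
  rw [himg_top, hVg] at hlt
  have hge := hg.finrank_le_finrank_span_image hnt hV S
  have : FiniteDimensional R' (span R' (g '' S)) :=
    finiteDimensional_of_le (span_mono (Set.image_subset_range g S))
  rw [← finrank_eq_rank]
  congr 1
  omega
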